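/- Let E be a meet-semilattice and let A be the unitization over ℂ of the semigroup algebra MonoidAlgebra ℂ E. Let e₀, e₁, …, e_n ∈ E (n ≥ 0) and suppose that the element p := e₀ · (1 − e₁) ⋯ (1 − e_n) of A is nonzero. Then for every f ∈ E one has f · p = p in A if and only if f ⊓ e₀ = e₀. -/

import Mathlib

/-!
Evaluation at the principal filter `↑e₀` — the character of `A` sending `e` to `1` if `e₀ ≤ e`
and to `0` otherwise — maps `p` to `1` as soon as no `eᵢ` lies above `e₀`, which is forced by
`p ≠ 0` since `e₀ (1 - eᵢ) = 0` when `e₀ ≤ eᵢ`. Applying it to `f p = p` then gives `e₀ ≤ f`;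
conversely `f e₀ = e₀` gives `f p = p` directly.
-/

instance semilatticeInfCommSemigroup (E : Type*) [SemilatticeInf E] : CommSemigroup E where
  mul := (· ⊓ ·)
  mul_assoc := inf_assoc
  mul_comm := inf_comm

noncomputable def semilatticeBasis {E : Type*} [SemilatticeInf E] (e : E) :
    Unitization ℂ (MonoidAlgebra ℂ E) :=
  Unitization.inr (MonoidAlgebra.single e (1 : ℂ))

section

variable {E : Type*} [SemilatticeInf E]

open Classical in
noncomputable def principalFilterIndicator (e₀ : E) : E →ₙ* ℂ where
  toFun e := if e₀ ≤ e then 1 else 0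
  map_mul' x y := by
    change (if e₀ ≤ x ⊓ y then (1 : ℂ) else 0) = _
    simp only [le_inf_iff, ite_zero_mul_ite_zero, mul_one]

noncomputable def principalFilterCharacter (e₀ : E) :
    Unitization ℂ (MonoidAlgebra ℂ E) →ₐ[ℂ] ℂ :=
  Unitization.lift (MonoidAlgebra.liftMagma ℂ (principalFilterIndicator e₀))

lemma semilatticeBasis_mul (e f : E) :
    semilatticeBasis e * semilatticeBasis f = semilatticeBasis (e ⊓ f) := by
  simp only [semilatticeBasis, ← Unitization.inr_mul, MonoidAlgebra.single_mul_single, one_mul]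
  rfl

open Classical in
lemma principalFilterCharacter_semilatticeBasis (e₀ e : E) :
    principalFilterCharacter e₀ (semilatticeBasis e) = if e₀ ≤ e then 1 else 0 := by
  simp [principalFilterCharacter, semilatticeBasis, principalFilterIndicator]

lemma semilatticeBasis_mul_prod_eq_zero {e₀ : E} {es : List E} (h : ∃ e ∈ es, e₀ ≤ e) :
    semilatticeBasis e₀ * (es.map fun e => 1 - semilatticeBasis e).prod = 0 := by
  obtain ⟨e, he, hle⟩ := h
  obtain ⟨c, hc⟩ := List.dvd_prod (List.mem_map_of_mem (f := fun e => 1 - semilatticeBasis e) he)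
  rw [hc, ← mul_assoc, mul_sub, mul_one, semilatticeBasis_mul, inf_eq_left.mpr hle, sub_self,
    zero_mul]

lemma principalFilterCharacter_mul_prod {e₀ : E} {es : List E} (h : ∀ e ∈ es, ¬ e₀ ≤ e) :
    principalFilterCharacter e₀
      (semilatticeBasis e₀ * (es.map fun e => 1 - semilatticeBasis e).prod) = 1 := by
  rw [map_mul, map_list_prod, List.map_map, principalFilterCharacter_semilatticeBasis,
    if_pos le_rfl, one_mul]
  refine List.prod_eq_one fun x hx => ?_
  obtain ⟨e, he, rfl⟩ := List.mem_map.mp hx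
  simp [principalFilterCharacter_semilatticeBasis, h e he]

end

theorem stmt_0 {E : Type*} [SemilatticeInf E] (e₀ : E) (es : List E)
    (p : Unitization ℂ (MonoidAlgebra ℂ E))
    (hp : p = semilatticeBasis e₀ * (es.map fun e => 1 - semilatticeBasis e).prod)
    (hp0 : p ≠ 0) (f : E) :
    semilatticeBasis f * p = p ↔ f ⊓ e₀ = e₀ := by
  have hes : ∀ e ∈ es, ¬ e₀ ≤ e := fun e he hle =>
    hp0 (hp ▸ semilatticeBasis_mul_prod_eq_zero ⟨e, he, hle⟩)
  constructor
  · intro hfp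
    have hχ := congrArg (principalFilterCharacter e₀) hfp
    rw [map_mul, hp, principalFilterCharacter_mul_prod hes, mul_one,
      principalFilterCharacter_semilatticeBasis] at hχ
    exact inf_eq_right.mpr (of_not_not fun hle => by simp [hle] at hχ)
  · intro hfe
    rw [hp, ← mul_assoc, semilatticeBasis_mul, hfe]
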